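/- arXiv:1509.05199 — 5 statements merged into one kernel-verified Lean document; each statement's English description precedes it below -/
import Mathlib

section
/- Let q : (0,∞) → ℝ be smooth with q' > 0 strictly decreasing and strictly convex (q'' < 0, q⁽³⁾ > 0). Define f_n(x) = q(x) + (N_n − x)²/(2nσ²), and let x_n* be the unique solution of q''(x_n*) = −1/(nσ²) and N_n* = x_n* + nσ² q'(x_n*). If N_n < N_n*, then f_n'(x) > 0 for all x > 0. -/
open Set

/-! Since `q''' > 0`, `q'` is convex, so it lies above its tangent at `x*`:
`q' x ≥ q' x* - (x - x*) / s`. Hence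
`f' x = q' x - (N - x) / s ≥ q' x* + (x* - N) / s = (N* - N) / s > 0`. -/

theorem ConvexOn.add_mul_sub_le_of_hasDerivAt {S : Set ℝ} {f : ℝ → ℝ} {f' a x : ℝ}
    (hf : ConvexOn ℝ S f) (ha : a ∈ S) (hx : x ∈ S) (hd : HasDerivAt f f' a) :
    f a + f' * (x - a) ≤ f x := by
  rcases lt_trichotomy x a with hxa | rfl | hax
  · have h := hf.slope_le_of_hasDerivAt hx ha hxa hd
    rw [slope_def_field, div_le_iff₀ (sub_pos.mpr hxa)] at h
    nlinarith
  · simp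
  · have h := hf.le_slope_of_hasDerivAt ha hx hax hd
    rw [slope_def_field, le_div_iff₀ (sub_pos.mpr hax)] at h
    nlinarith

theorem hasDerivAt_add_sq_sub_div {q : ℝ → ℝ} {q'x : ℝ} (N s x : ℝ) (hq : HasDerivAt q q'x x) :
    HasDerivAt (fun y => q y + (N - y) ^ 2 / (2 * s)) (q'x - (N - x) / s) x := by
  have hsq : HasDerivAt (fun y => (N - y) ^ 2) (2 * (N - x) * (0 - 1)) x := by
    simpa using ((hasDerivAt_const x N).sub (hasDerivAt_id x)).fun_pow 2
  refine (hq.add (hsq.div_const (2 * s))).congr_deriv ?_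
  rw [show 2 * (N - x) * (0 - 1) = 2 * -(N - x) by ring, mul_div_mul_left _ _ two_ne_zero]
  ring

theorem stmt3_general (q q' q'' q''' : ℝ → ℝ) (s N xstar Nstar : ℝ)
    (hs : 0 < s)
    (hq : ∀ x ∈ Ioi (0:ℝ), HasDerivAt q (q' x) x)
    (hq' : ∀ x ∈ Ioi (0:ℝ), HasDerivAt q' (q'' x) x)
    (hq'' : ∀ x ∈ Ioi (0:ℝ), HasDerivAt q'' (q''' x) x)
    (hq'''pos : ∀ x ∈ Ioi (0:ℝ), 0 < q''' x)
    (hxstar : xstar ∈ Ioi (0:ℝ))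
    (hxdef : q'' xstar = -(1 / s))
    (hNstar : Nstar = xstar + s * q' xstar)
    (hN : N < Nstar) :
    ∀ x ∈ Ioi (0:ℝ), 0 < deriv (fun y => q y + (N - y) ^ 2 / (2 * s)) x := by
  have hconvex : ConvexOn ℝ (Ioi 0) q' := by
    refine convexOn_of_hasDerivWithinAt2_nonneg (f' := q'') (f'' := q''') (convex_Ioi 0)
      (fun x hx => (hq' x hx).continuousAt.continuousWithinAt) ?_ ?_ ?_ <;>
      simp only [interior_Ioi]
    · exact fun x hx => (hq' x hx).hasDerivWithinAt
    · exact fun x hx => (hq'' x hx).hasDerivWithinAt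
    · exact fun x hx => (hq'''pos x hx).le
  intro x hx
  have htangent : q' xstar - (x - xstar) / s ≤ q' x := by
    have h := hconvex.add_mul_sub_le_of_hasDerivAt hxstar hx (hq' xstar hxstar)
    rw [hxdef] at h
    linarith [show -(1 / s) * (x - xstar) = -((x - xstar) / s) by ring]
  rw [(hasDerivAt_add_sq_sub_div N s x (hq x hx)).deriv]
  calc 0 < (Nstar - N) / s := div_pos (sub_pos.mpr hN) hs
    _ = q' xstar - (x - xstar) / s - (N - x) / s := by rw [hNstar]; field_simp; ring
    _ ≤ q' x - (N - x) / s := by linarith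

/-- Lemma 2.2(a): with f_n(x) = q(x) + (N-x)²/(2s) (s = nσ²), if N < N* then
f_n' > 0 on (0,∞). -/
theorem stmt3 (q q' q'' q''' : ℝ → ℝ) (s N xstar Nstar : ℝ)
    (hs : 0 < s)
    (hq : ∀ x ∈ Ioi (0:ℝ), HasDerivAt q (q' x) x)
    (hq' : ∀ x ∈ Ioi (0:ℝ), HasDerivAt q' (q'' x) x)
    (hq'' : ∀ x ∈ Ioi (0:ℝ), HasDerivAt q'' (q''' x) x)
    (hq'pos : ∀ x ∈ Ioi (0:ℝ), 0 < q' x)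
    (hq''neg : ∀ x ∈ Ioi (0:ℝ), q'' x < 0)
    (hq'''pos : ∀ x ∈ Ioi (0:ℝ), 0 < q''' x)
    (hxstar : xstar ∈ Ioi (0:ℝ))
    (hxdef : q'' xstar = -(1 / s))
    (hNstar : Nstar = xstar + s * q' xstar)
    (hN : N < Nstar) :
    ∀ x ∈ Ioi (0:ℝ), 0 < deriv (fun y => q y + (N - y) ^ 2 / (2 * s)) x :=
  stmt3_general q q' q'' q''' s N xstar Nstar hs hq hq' hq'' hq'''pos hxstar hxdef hNstar hN
end

section
/- Under the setting of the minimization of f_n(x) = q(x) + (N_n − x)²/(2nσ²), if N_n = N_n* (where N_n* = x_n* + nσ² q'(x_n*) and q''(x_n*) = −1/(nσ²)), then f_n'(x) ≥ 0 for all x > 0, with equality if and only if x = x_n*. -/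
open Real Set Filter

/-!
With `g x = q' x + (x - N) / s` the derivative of `f`, we have `g' = q'' + 1 / s`, which is
strictly increasing because `q''' > 0`, so `g` is strictly convex on `(0, ∞)`. The choice of
`x*` and `N*` makes both `g x* = 0` and `g' x* = 0`, so `x*` is the strict global minimum of `g`
on `(0, ∞)`, with value `0`.
-/

theorem StrictConvexOn.lt_of_hasDerivAt_eq_zero {S : Set ℝ} {f : ℝ → ℝ} {a x : ℝ}
    (hf : StrictConvexOn ℝ S f) (ha : a ∈ S) (hx : x ∈ S) (hxa : x ≠ a)
    (hf' : HasDerivAt f 0 a) : f a < f x := by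
  rcases hxa.lt_or_gt with hlt | hgt
  · exact (slope_neg_iff_of_le hlt.le).1 (hf.slope_lt_of_hasDerivAt hx ha hlt hf')
  · exact (slope_pos_iff_of_le hgt.le).1 (hf.lt_slope_of_hasDerivAt ha hx hgt hf')

theorem IsOpen.strictConvexOn_of_hasDerivAt {D : Set ℝ} {f f' : ℝ → ℝ}
    (hDo : IsOpen D) (hD : Convex ℝ D) (hf : ∀ x ∈ D, HasDerivAt f (f' x) x)
    (hf' : StrictMonoOn f' D) : StrictConvexOn ℝ D f := by
  refine StrictMonoOn.strictConvexOn_of_deriv hD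
    (fun x hx => (hf x hx).continuousAt.continuousWithinAt) ?_
  rw [hDo.interior_eq]
  exact hf'.congr fun x hx => ((hf x hx).deriv).symm

theorem IsOpen.strictMonoOn_of_hasDerivAt_pos {D : Set ℝ} {f f' : ℝ → ℝ}
    (hDo : IsOpen D) (hD : Convex ℝ D) (hf : ∀ x ∈ D, HasDerivAt f (f' x) x)
    (hf' : ∀ x ∈ D, 0 < f' x) : StrictMonoOn f D := by
  refine strictMonoOn_of_deriv_pos hD
    (fun x hx => (hf x hx).continuousAt.continuousWithinAt) fun x hx => ?_
  rw [hDo.interior_eq] at hx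
  exact (hf x hx).deriv ▸ hf' x hx

theorem hasDerivAt_sub_sq_div (N s x : ℝ) :
    HasDerivAt (fun y : ℝ => (N - y) ^ 2 / (2 * s)) ((x - N) / s) x := by
  refine (((hasDerivAt_id' x).const_sub N).fun_pow 2 |>.div_const (2 * s)).congr_deriv ?_
  ring

theorem stmt4_general (q q' q'' q''' : ℝ → ℝ) (s N xstar Nstar : ℝ)
    (hs : 0 < s)
    (hq : ∀ x ∈ Ioi (0:ℝ), HasDerivAt q (q' x) x)
    (hq' : ∀ x ∈ Ioi (0:ℝ), HasDerivAt q' (q'' x) x)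
    (hq'' : ∀ x ∈ Ioi (0:ℝ), HasDerivAt q'' (q''' x) x)
    (hq'''pos : ∀ x ∈ Ioi (0:ℝ), 0 < q''' x)
    (hxstar : xstar ∈ Ioi (0:ℝ))
    (hxdef : q'' xstar = -(1 / s))
    (hNstar : Nstar = xstar + s * q' xstar)
    (hN : N = Nstar) :
    ∀ x ∈ Ioi (0:ℝ),
      0 ≤ deriv (fun y => q y + (N - y) ^ 2 / (2 * s)) x ∧
      (deriv (fun y => q y + (N - y) ^ 2 / (2 * s)) x = 0 ↔ x = xstar) := by
  set g : ℝ → ℝ := fun x => q' x + (x - N) / s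
  have hg : ∀ x ∈ Ioi (0:ℝ), HasDerivAt g (q'' x + 1 / s) x := fun x hx => by
    simpa using (hq' x hx).fun_add (((hasDerivAt_id' x).sub_const N).div_const s)
  have hg_convex : StrictConvexOn ℝ (Ioi 0) g :=
    isOpen_Ioi.strictConvexOn_of_hasDerivAt (convex_Ioi 0) hg
      ((isOpen_Ioi.strictMonoOn_of_hasDerivAt_pos (convex_Ioi 0) hq'' hq'''pos).add_const _)
  have hg_xstar : g xstar = 0 := by
    simp only [g, hN, hNstar]
    field_simp
    ring
  have hg'_xstar : HasDerivAt g 0 xstar := by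
    simpa [hxdef] using hg xstar hxstar
  intro x hx
  have hfg : deriv (fun y => q y + (N - y) ^ 2 / (2 * s)) x = g x :=
    ((hq x hx).fun_add (hasDerivAt_sub_sq_div N s x)).deriv
  rw [hfg]
  rcases eq_or_ne x xstar with rfl | hne
  · simp [hg_xstar]
  · have hpos := hg_convex.lt_of_hasDerivAt_eq_zero hxstar hx hne hg'_xstar
    rw [hg_xstar] at hpos
    exact ⟨hpos.le, iff_of_false hpos.ne' hne⟩

/-- Lemma 2.2(b): if N = N*, then f_n'(x) ≥ 0 for all x > 0, with equality iff
x = x_n*. -/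
theorem stmt4 (q q' q'' q''' : ℝ → ℝ) (s N xstar Nstar : ℝ)
    (hs : 0 < s)
    (hq : ∀ x ∈ Ioi (0:ℝ), HasDerivAt q (q' x) x)
    (hq' : ∀ x ∈ Ioi (0:ℝ), HasDerivAt q' (q'' x) x)
    (hq'' : ∀ x ∈ Ioi (0:ℝ), HasDerivAt q'' (q''' x) x)
    (hq'pos : ∀ x ∈ Ioi (0:ℝ), 0 < q' x)
    (hq''neg : ∀ x ∈ Ioi (0:ℝ), q'' x < 0)
    (hq'''pos : ∀ x ∈ Ioi (0:ℝ), 0 < q''' x)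
    (hxstar : xstar ∈ Ioi (0:ℝ))
    (hxdef : q'' xstar = -(1 / s))
    (hNstar : Nstar = xstar + s * q' xstar)
    (hN : N = Nstar) :
    ∀ x ∈ Ioi (0:ℝ),
      0 ≤ deriv (fun y => q y + (N - y) ^ 2 / (2 * s)) x ∧
      (deriv (fun y => q y + (N - y) ^ 2 / (2 * s)) x = 0 ↔ x = xstar) :=
  stmt4_general q q' q'' q''' s N xstar Nstar hs hq hq' hq'' hq'''pos hxstar hxdef hNstar hN
end

section
/- Let q : (0,∞) → ℝ be smooth with q' > 0 strictly decreasing and strictly convex. Suppose N_n > N_n* and let x_n ∈ (x_n*, ∞) be the critical point of f_n(x) = q(x) + (N_n−x)²/(2nσ²) satisfying q'(x_n) = (N_n − x_n)/(nσ²). Then N_n − N_n* ≤ x_n ≤ N_n, and nσ² f_n''(x_n) = 1 − nσ²|q''(x_n)| = 1 + O(N_n*/N_n). -/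
/-!
Write `s = nσ²`. The critical-point equation reads `s q'(xₙ) = Nₙ - xₙ`, so `q' > 0` gives
`xₙ ≤ Nₙ`, and `q'(xₙ) < q'(xₙ*)` (as `q'' < 0`) gives `Nₙ - xₙ < Nₙ* - xₙ*`. Since `q''' > 0`,
`q'` is strictly convex, so the chord slope of `q'` over `[xₙ*, xₙ]` is below `q''(xₙ)`; multiplied
by `s` that slope is `(Nₙ - Nₙ*)/(xₙ - xₙ*) - 1`, and `0 < xₙ - xₙ* < Nₙ` turns this into
`s |q''(xₙ)| < Nₙ*/Nₙ`.
-/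

open Real Set Filter Asymptotics

section Calculus

variable {D : Set ℝ} {f f' f'' : ℝ → ℝ}

lemma strictAntiOn_of_hasDerivAt_neg (hD : Convex ℝ D)
    (hf : ∀ x ∈ D, HasDerivAt f (f' x) x) (hf'₀ : ∀ x ∈ D, f' x < 0) : StrictAntiOn f D :=
  strictAntiOn_of_hasDerivWithinAt_neg hD (fun x hx => (hf x hx).continuousAt.continuousWithinAt)
    (fun x hx => (hf x (interior_subset hx)).hasDerivWithinAt)
    (fun x hx => hf'₀ x (interior_subset hx))

lemma strictConvexOn_of_hasDerivAt2_pos (hD : Convex ℝ D) (hDo : IsOpen D)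
    (hf : ∀ x ∈ D, HasDerivAt f (f' x) x) (hf' : ∀ x ∈ D, HasDerivAt f' (f'' x) x)
    (hf''₀ : ∀ x ∈ D, 0 < f'' x) : StrictConvexOn ℝ D f := by
  have hmono : StrictMonoOn f' D :=
    strictMonoOn_of_hasDerivWithinAt_pos hD (fun x hx => (hf' x hx).continuousAt.continuousWithinAt)
      (fun x hx => (hf' x (interior_subset hx)).hasDerivWithinAt)
      (fun x hx => hf''₀ x (interior_subset hx))
  refine StrictMonoOn.strictConvexOn_of_deriv hD
    (fun x hx => (hf x hx).continuousAt.continuousWithinAt) ?_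
  rw [hDo.interior_eq]
  intro x hx y hy hxy
  rw [(hf x hx).deriv, (hf y hy).deriv]
  exact hmono hx hy hxy

end Calculus

section CriticalPoint

variable {g : ℝ → ℝ} {s x₀ x N : ℝ}

lemma le_of_mul_eq_sub (hs : 0 < s) (hgx : 0 < g x) (hcrit : s * g x = N - x) : x ≤ N := by
  nlinarith

lemma sub_lt_of_mul_eq_sub (hs : 0 < s) (hg : g x < g x₀) (hcrit : s * g x = N - x) :
    N - (x₀ + s * g x₀) < x - x₀ := by
  nlinarith

lemma neg_mul_lt_div_of_slope_lt {d : ℝ} (hs : 0 < s) (hx₀ : 0 < x₀) (hx : x₀ < x)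
    (hxN : x ≤ N) (hN : x₀ + s * g x₀ < N) (hcrit : s * g x = N - x)
    (hslope : slope g x₀ x < d) : -(s * d) < (x₀ + s * g x₀) / N := by
  set M := x₀ + s * g x₀
  have hδ : 0 < x - x₀ := sub_pos.mpr hx
  have hNpos : 0 < N := by linarith
  have hchord : s * slope g x₀ x = (N - M) / (x - x₀) - 1 := by
    rw [slope_def_field, mul_div_assoc', mul_sub, hcrit]
    field_simp
    ring
  have hcompare : (N - M) / N ≤ (N - M) / (x - x₀) :=
    div_le_div_of_nonneg_left (by linarith) hδ (by linarith)
  have hM : M / N = 1 - (N - M) / N := by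
    field_simp
    ring
  linarith [mul_lt_mul_of_pos_left hslope hs]

end CriticalPoint

theorem stmt6_general (q' q'' q''' : ℝ → ℝ) (σ2 : ℝ) (hσ : 0 < σ2)
    (hq' : ∀ x ∈ Ioi (0:ℝ), HasDerivAt q' (q'' x) x)
    (hq'' : ∀ x ∈ Ioi (0:ℝ), HasDerivAt q'' (q''' x) x)
    (hq'pos : ∀ x ∈ Ioi (0:ℝ), 0 < q' x)
    (hq''neg : ∀ x ∈ Ioi (0:ℝ), q'' x < 0)
    (hq'''pos : ∀ x ∈ Ioi (0:ℝ), 0 < q''' x)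
    (N Nstar xstar xn : ℕ → ℝ)
    (hxstar : ∀ n : ℕ, 1 ≤ n → xstar n ∈ Ioi (0:ℝ) ∧
      q'' (xstar n) = -(1 / ((n : ℝ) * σ2)))
    (hNstar : ∀ n : ℕ, 1 ≤ n →
      Nstar n = xstar n + (n : ℝ) * σ2 * q' (xstar n))
    (hN : ∀ n : ℕ, 1 ≤ n → Nstar n < N n)
    (hxn : ∀ n : ℕ, 1 ≤ n → xstar n < xn n ∧
      q' (xn n) = (N n - xn n) / ((n : ℝ) * σ2)) :
    (∀ n : ℕ, 1 ≤ n → N n - Nstar n ≤ xn n ∧ xn n ≤ N n) ∧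
    (∀ n : ℕ, 1 ≤ n →
      (n : ℝ) * σ2 * (q'' (xn n) + 1 / ((n : ℝ) * σ2)) =
        1 - (n : ℝ) * σ2 * |q'' (xn n)|) ∧
    (fun n : ℕ => (n : ℝ) * σ2 * (q'' (xn n) + 1 / ((n : ℝ) * σ2)) - 1)
      =O[atTop] fun n : ℕ => Nstar n / N n := by
  have hanti := strictAntiOn_of_hasDerivAt_neg (convex_Ioi 0) hq' hq''neg
  have hconv := strictConvexOn_of_hasDerivAt2_pos (convex_Ioi 0) isOpen_Ioi hq' hq'' hq'''pos
  have key : ∀ n : ℕ, 1 ≤ n → (N n - Nstar n ≤ xn n ∧ xn n ≤ N n) ∧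
      -((n : ℝ) * σ2 * q'' (xn n)) < Nstar n / N n ∧ q'' (xn n) < 0 ∧
      (n : ℝ) * σ2 * (q'' (xn n) + 1 / ((n : ℝ) * σ2)) = 1 + (n : ℝ) * σ2 * q'' (xn n) := by
    intro n hn
    have hs : 0 < (n : ℝ) * σ2 := mul_pos (by exact_mod_cast hn) hσ
    obtain ⟨hx₀, -⟩ := hxstar n hn
    obtain ⟨hx, hcrit⟩ := hxn n hn
    have hxpos : xn n ∈ Ioi (0:ℝ) := mem_Ioi.mpr ((mem_Ioi.mp hx₀).trans hx)
    rw [eq_div_iff hs.ne', mul_comm] at hcrit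
    have hxN := le_of_mul_eq_sub hs (hq'pos _ hxpos) hcrit
    have hlt := sub_lt_of_mul_eq_sub hs (hanti hx₀ hxpos hx) hcrit
    rw [hNstar n hn]
    refine ⟨⟨by linarith [mem_Ioi.mp hx₀], hxN⟩, ?_, hq''neg _ hxpos, ?_⟩
    · exact neg_mul_lt_div_of_slope_lt hs hx₀ hx hxN (hNstar n hn ▸ hN n hn) hcrit
        (hconv.slope_lt_of_hasDerivAt hx₀ hxpos hx (hq' _ hxpos))
    · rw [mul_add, mul_one_div_cancel hs.ne', add_comm]
  refine ⟨fun n hn => (key n hn).1, fun n hn => ?_, ?_⟩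
  · rw [(key n hn).2.2.2, abs_of_neg (key n hn).2.2.1]
    ring
  · refine isBigO_iff.mpr ⟨1, eventually_atTop.mpr ⟨1, fun n hn => ?_⟩⟩
    obtain ⟨-, hbound, hneg, hexpand⟩ := key n hn
    have hs : 0 < (n : ℝ) * σ2 := mul_pos (by exact_mod_cast hn) hσ
    rw [hexpand, add_sub_cancel_left, Real.norm_eq_abs, Real.norm_eq_abs, one_mul,
      abs_of_neg (mul_neg_of_pos_of_neg hs hneg)]
    exact hbound.le.trans (le_abs_self _)

/-- Lemma 2.4: for N_n > N_n*, the critical point x_n ∈ (x_n*, N_n) satisfies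
N_n − N_n* ≤ x_n ≤ N_n, and nσ² f_n''(x_n) = 1 − nσ²|q''(x_n)| = 1 + O(N_n*/N_n). -/
theorem stmt6 (q q' q'' q''' : ℝ → ℝ) (σ2 : ℝ) (hσ : 0 < σ2)
    (hq : ∀ x ∈ Ioi (0:ℝ), HasDerivAt q (q' x) x)
    (hq' : ∀ x ∈ Ioi (0:ℝ), HasDerivAt q' (q'' x) x)
    (hq'' : ∀ x ∈ Ioi (0:ℝ), HasDerivAt q'' (q''' x) x)
    (hq'pos : ∀ x ∈ Ioi (0:ℝ), 0 < q' x)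
    (hq''neg : ∀ x ∈ Ioi (0:ℝ), q'' x < 0)
    (hq'''pos : ∀ x ∈ Ioi (0:ℝ), 0 < q''' x)
    (N Nstar xstar xn : ℕ → ℝ)
    (hxstar : ∀ n : ℕ, 1 ≤ n → xstar n ∈ Ioi (0:ℝ) ∧
      q'' (xstar n) = -(1 / ((n : ℝ) * σ2)))
    (hNstar : ∀ n : ℕ, 1 ≤ n →
      Nstar n = xstar n + (n : ℝ) * σ2 * q' (xstar n))
    (hN : ∀ n : ℕ, 1 ≤ n → Nstar n < N n)
    (hxn : ∀ n : ℕ, 1 ≤ n → xstar n < xn n ∧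
      q' (xn n) = (N n - xn n) / ((n : ℝ) * σ2)) :
    (∀ n : ℕ, 1 ≤ n → N n - Nstar n ≤ xn n ∧ xn n ≤ N n) ∧
    (∀ n : ℕ, 1 ≤ n →
      (n : ℝ) * σ2 * (q'' (xn n) + 1 / ((n : ℝ) * σ2)) =
        1 - (n : ℝ) * σ2 * |q'' (xn n)|) ∧
    (fun n : ℕ => (n : ℝ) * σ2 * (q'' (xn n) + 1 / ((n : ℝ) * σ2)) - 1)
      =O[atTop] fun n : ℕ => Nstar n / N n :=
  stmt6_general q' q'' q''' σ2 hσ hq' hq'' hq'pos hq''neg hq'''pos N Nstar xstar xn hxstar hNstar hN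
    hxn
end

section
/- Let q satisfy Assumption 2.1 and let ψ(t) = t ξ(t) − q(ξ(t)) with q'(ξ(t)) = t. Then: (a) lim_{t→0⁺} t ψ'(t)/log t = ∞ (in magnitude, i.e., t ξ(t)/|log t| → ∞); (b) there is c > 0 with −ψ''(t) ≥ c ψ'(t)/t for small t > 0; (c) 0 ≤ ψ⁽³⁾(t) ≤ C |ψ''(t)|/t for some C > 0 and small t > 0. -/
/-!
On `(0, t0)` the function `ξ = ψ'` inverts `q'`, so `ξ' = 1 / q''∘ξ` and
`ξ'' = q'''∘ξ / (-q''∘ξ)³`. Parts (b) and (c) are then the bounds of Assumption 2.1 at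
`x = ξ t`, after substituting `q'(ξ t) = t`. For (a), `ξ t → ∞` as `t → 0⁺`, and the growth
condition gives `x q'(x) ≥ log x ≥ 1` for large `x`, so `|log t| = |log q'(ξ t)| ≤ log (ξ t)`;
hence `t ξ(t) / |log t|` dominates `ξ q'(ξ) / log ξ → ∞`.
-/

open Real Set Filter Topology

theorem HasDerivAt.mul_eq_one_of_leftInverse {f g : ℝ → ℝ} {f' g' t : ℝ}
    (hf : HasDerivAt f f' (g t)) (hg : HasDerivAt g g' t) (hfg : ∀ᶠ s in 𝓝 t, f (g s) = s) :
    f' * g' = 1 :=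
  ((hf.comp t hg).congr_of_eventuallyEq (hfg.mono fun _ => Eq.symm)).unique (hasDerivAt_id t)

section InverseFunction

variable {s : Set ℝ} {f' f'' f''' g g' g'' : ℝ → ℝ}

theorem mul_deriv_eq_one_of_leftInverse (hs : IsOpen s)
    (hf' : ∀ t ∈ s, HasDerivAt f' (f'' (g t)) (g t)) (hfg : ∀ t ∈ s, f' (g t) = t)
    (hg : ∀ t ∈ s, HasDerivAt g (g' t) t) :
    ∀ t ∈ s, f'' (g t) * g' t = 1 := fun t ht =>
  (hf' t ht).mul_eq_one_of_leftInverse (hg t ht) (eventually_of_mem (hs.mem_nhds ht) hfg)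

theorem eqOn_deriv_inv_of_leftInverse (hs : IsOpen s)
    (hf' : ∀ t ∈ s, HasDerivAt f' (f'' (g t)) (g t)) (hfg : ∀ t ∈ s, f' (g t) = t)
    (hg : ∀ t ∈ s, HasDerivAt g (g' t) t) :
    ∀ t ∈ s, g' t = (f'' (g t))⁻¹ := fun t ht =>
  eq_inv_of_mul_eq_one_right (mul_deriv_eq_one_of_leftInverse hs hf' hfg hg t ht)

theorem eqOn_deriv2_of_leftInverse (hs : IsOpen s)
    (hf' : ∀ t ∈ s, HasDerivAt f' (f'' (g t)) (g t))
    (hf'' : ∀ t ∈ s, HasDerivAt f'' (f''' (g t)) (g t)) (hfg : ∀ t ∈ s, f' (g t) = t)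
    (hg : ∀ t ∈ s, HasDerivAt g (g' t) t) (hg' : ∀ t ∈ s, HasDerivAt g' (g'' t) t) :
    ∀ t ∈ s, g'' t = -f''' (g t) / f'' (g t) ^ 3 := by
  have hg'_eq := eqOn_deriv_inv_of_leftInverse hs hf' hfg hg
  intro t ht
  have hne : f'' (g t) ≠ 0 :=
    left_ne_zero_of_mul_eq_one (mul_deriv_eq_one_of_leftInverse hs hf' hfg hg t ht)
  have hinv := ((hf'' t ht).comp t (hg t ht)).inv hne
  rw [(hg' t ht).unique (hinv.congr_of_eventuallyEq (eventually_of_mem (hs.mem_nhds ht) hg'_eq)),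
    hg'_eq t ht, Function.comp_apply]
  field_simp

end InverseFunction

theorem tendsto_nhdsGT_zero_atTop_of_antitoneOn_leftInverse {f g : ℝ → ℝ} {a t0 : ℝ}
    (ht0 : 0 < t0) (hf : AntitoneOn f (Ioi a)) (hfpos : ∀ x ∈ Ioi a, 0 < f x)
    (hfg : ∀ t ∈ Ioo 0 t0, g t ∈ Ioi a ∧ f (g t) = t) :
    Tendsto g (𝓝[>] 0) atTop := by
  refine tendsto_atTop.2 fun X => ?_
  have hY : max X (a + 1) ∈ Ioi a := (lt_add_one a).trans_le (le_max_right _ _)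
  filter_upwards [Ioo_mem_nhdsGT (lt_min ht0 (hfpos _ hY))] with t ht
  obtain ⟨hga, hfgt⟩ := hfg t ⟨ht.1, ht.2.trans_le (min_le_left _ _)⟩
  by_contra! h
  have := hf hga hY (h.le.trans (le_max_left _ _))
  linarith [ht.2.trans_le (min_le_right _ _)]

theorem abs_log_le_log_of_one_le_mul {x y : ℝ} (hy0 : 0 < y) (hy1 : y ≤ 1) (hxy : 1 ≤ x * y) :
    |log y| ≤ log x := by
  rw [abs_of_nonpos (log_nonpos hy0.le hy1), ← log_inv]
  exact log_le_log (inv_pos.2 hy0) ((inv_le_iff_one_le_mul₀ hy0).2 hxy)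

theorem tendsto_mul_div_abs_log_of_leftInverse {f g : ℝ → ℝ} {t0 : ℝ} (ht0 : 0 < t0)
    (hg : Tendsto g (𝓝[>] 0) atTop) (hf : Tendsto (fun x => x * f x / log x) atTop atTop)
    (hfg : ∀ t ∈ Ioo 0 t0, f (g t) = t) :
    Tendsto (fun t => t * g t / |log t|) (𝓝[>] 0) atTop := by
  have hcomp := hf.comp hg
  refine tendsto_atTop_mono' _ ?_ hcomp
  filter_upwards [hcomp.eventually_ge_atTop 1, hg.eventually_ge_atTop (exp 1),
    Ioo_mem_nhdsGT (lt_min ht0 one_pos)] with t hge hlarge ht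
  have ht1 : t < 1 := ht.2.trans_le (min_le_right _ _)
  have hlog : 1 ≤ log (g t) := (le_log_iff_exp_le ((exp_pos 1).trans_le hlarge)).2 hlarge
  rw [Function.comp_apply, hfg t ⟨ht.1, ht.2.trans_le (min_le_left _ _)⟩] at hge ⊢
  have hgt : log (g t) ≤ g t * t := (one_le_div (by linarith)).1 hge
  rw [mul_comm t]
  exact div_le_div_of_nonneg_left (by nlinarith) (abs_pos.2 (log_neg ht.1 ht1).ne)
    (abs_log_le_log_of_one_le_mul ht.1 ht1.le (by linarith))

theorem inv_mul_div_le_neg_inv {c x t y : ℝ} (hc : 0 < c) (hx : 0 < x) (ht : 0 < t) (hy : y < 0)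
    (h : -y ≤ c * t / x) : c⁻¹ * x / t ≤ -y⁻¹ := by
  rw [← inv_neg, show c⁻¹ * x / t = (c * t / x)⁻¹ by field_simp]
  exact inv_anti₀ (neg_pos.2 hy) h

theorem neg_div_pow_three_nonneg_and_le {c₁ c₄ x t y z : ℝ} (hc₁ : 0 < c₁) (hc₄ : 0 ≤ c₄)
    (hx : 0 < x) (ht : 0 < t) (hy : y < 0) (hz : 0 < z) (h₁ : c₁ * t / x ≤ -y)
    (h₄ : z ≤ c₄ * -y / x) :
    0 ≤ -z / y ^ 3 ∧ -z / y ^ 3 ≤ c₄ / c₁ * -y⁻¹ / t := by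
  obtain ⟨u, hu, rfl⟩ : ∃ u, 0 < u ∧ y = -u := ⟨-y, by linarith, by ring⟩
  rw [neg_neg] at h₁ h₄
  have h₁' : c₁ * t ≤ x * u := by rw [← div_le_iff₀' hx]; exact h₁
  rw [show -z / (-u) ^ 3 = z / u ^ 3 by ring]
  refine ⟨by positivity, ?_⟩
  calc z / u ^ 3 ≤ c₄ * u / x / u ^ 3 := by gcongr
    _ = c₄ / (x * u * u) := by field_simp
    _ ≤ c₄ / (c₁ * t * u) := by gcongr
    _ = c₄ / c₁ * -(-u)⁻¹ / t := by field_simp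

theorem stmt11_general (a c₁ c₂ c₃ c₄ t0 : ℝ)
    (q' q'' q''' : ℝ → ℝ) (ξ ξ' ξ'' : ℝ → ℝ)
    (ha : 0 < a) (ht0 : 0 < t0)
    (hc₁ : 0 < c₁) (hc₂ : 0 < c₂) (hc₄ : 0 < c₄)
    (hq' : ∀ x ∈ Ioi a, HasDerivAt q' (q'' x) x)
    (hq'' : ∀ x ∈ Ioi a, HasDerivAt q'' (q''' x) x)
    (hq'pos : ∀ x ∈ Ioi a, 0 < q' x)
    (hq''neg : ∀ x ∈ Ioi a, q'' x < 0)
    (hq'''pos : ∀ x ∈ Ioi a, 0 < q''' x)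
    (hgrow : Tendsto (fun x => x * q' x / Real.log x) atTop atTop)
    (hb1 : ∀ x ∈ Ioi a, c₁ * q' x / x ≤ -q'' x ∧ -q'' x ≤ c₂ * q' x / x)
    (hb2 : ∀ x ∈ Ioi a, c₃ * (-q'' x) / x ≤ q''' x ∧ q''' x ≤ c₄ * (-q'' x) / x)
    (hξ : ∀ t ∈ Ioo (0:ℝ) t0, ξ t ∈ Ioi a ∧ q' (ξ t) = t)
    (hξd : ∀ t ∈ Ioo (0:ℝ) t0, HasDerivAt ξ (ξ' t) t)
    (hξdd : ∀ t ∈ Ioo (0:ℝ) t0, HasDerivAt ξ' (ξ'' t) t) :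
    Tendsto (fun t => t * ξ t / |Real.log t|) (𝓝[>] (0:ℝ)) atTop ∧
    (∃ c > (0:ℝ), ∀ᶠ t in 𝓝[>] (0:ℝ), c * ξ t / t ≤ -ξ' t) ∧
    (∃ Cc > (0:ℝ), ∀ᶠ t in 𝓝[>] (0:ℝ), 0 ≤ ξ'' t ∧ ξ'' t ≤ Cc * (-ξ' t) / t) := by
  have hq'_anti : AntitoneOn q' (Ioi a) :=
    antitoneOn_of_hasDerivWithinAt_nonpos (convex_Ioi a)
      (fun x hx => (hq' x hx).continuousAt.continuousWithinAt)
      (fun x hx => (hq' x (interior_subset hx)).hasDerivWithinAt)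
      (fun x hx => (hq''neg x (interior_subset hx)).le)
  have hq'ξ t (ht : t ∈ Ioo 0 t0) := hq' _ (hξ t ht).1
  have hq''ξ t (ht : t ∈ Ioo 0 t0) := hq'' _ (hξ t ht).1
  have hqξ : ∀ t ∈ Ioo 0 t0, q' (ξ t) = t := fun t ht => (hξ t ht).2
  have hξ'_eq := eqOn_deriv_inv_of_leftInverse isOpen_Ioo hq'ξ hqξ hξd
  have hξ''_eq := eqOn_deriv2_of_leftInverse isOpen_Ioo hq'ξ hq''ξ hqξ hξd hξdd
  refine ⟨?_, ⟨c₂⁻¹, inv_pos.2 hc₂, ?_⟩, ⟨c₄ / c₁, div_pos hc₄ hc₁, ?_⟩⟩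
  · exact tendsto_mul_div_abs_log_of_leftInverse ht0
      (tendsto_nhdsGT_zero_atTop_of_antitoneOn_leftInverse ht0 hq'_anti hq'pos hξ) hgrow hqξ
  all_goals
    filter_upwards [Ioo_mem_nhdsGT ht0] with t ht
    obtain ⟨hxa, hqt⟩ := hξ t ht
    obtain ⟨hlower, hupper⟩ := hb1 _ hxa
    rw [hqt] at hlower hupper
    rw [hξ'_eq t ht]
  · exact inv_mul_div_le_neg_inv hc₂ (ha.trans hxa) ht.1 (hq''neg _ hxa) hupper
  · rw [hξ''_eq t ht]
    exact neg_div_pow_three_nonneg_and_le hc₁ hc₄.le (ha.trans hxa) ht.1 (hq''neg _ hxa)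
      (hq'''pos _ hxa) hlower (hb2 _ hxa).2

/-- Lemma 4.3: under Assumption 2.1, with ψ' = ξ, ψ'' = ξ', ψ''' = ξ'':
(a) t ψ'(t)/|log t| → ∞ as t → 0⁺; (b) −ψ''(t) ≥ c ψ'(t)/t for small t;
(c) 0 ≤ ψ'''(t) ≤ C |ψ''(t)|/t for small t. -/
theorem stmt11 (a α c₁ c₂ c₃ c₄ t0 : ℝ)
    (q q' q'' q''' : ℝ → ℝ) (ξ ξ' ξ'' : ℝ → ℝ)
    (ha : 0 < a) (hα : α ∈ Ioo (0:ℝ) 1) (ht0 : 0 < t0)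
    (hc₁ : 0 < c₁) (hc₂ : 0 < c₂) (hc₃ : 0 < c₃) (hc₄ : 0 < c₄)
    (hq : ∀ x ∈ Ioi a, HasDerivAt q (q' x) x)
    (hq' : ∀ x ∈ Ioi a, HasDerivAt q' (q'' x) x)
    (hq'' : ∀ x ∈ Ioi a, HasDerivAt q'' (q''' x) x)
    (hq'pos : ∀ x ∈ Ioi a, 0 < q' x)
    (hq''neg : ∀ x ∈ Ioi a, q'' x < 0)
    (hq'''pos : ∀ x ∈ Ioi a, 0 < q''' x)
    (hgrow : Tendsto (fun x => x * q' x / Real.log x) atTop atTop)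
    (hb1 : ∀ x ∈ Ioi a, c₁ * q' x / x ≤ -q'' x ∧ -q'' x ≤ c₂ * q' x / x)
    (hb2 : ∀ x ∈ Ioi a, c₃ * (-q'' x) / x ≤ q''' x ∧ q''' x ≤ c₄ * (-q'' x) / x)
    (hαq : ∀ x ∈ Ioi a, q' x ≤ α * q x / x)
    (hξ : ∀ t ∈ Ioo (0:ℝ) t0, ξ t ∈ Ioi a ∧ q' (ξ t) = t)
    (hξd : ∀ t ∈ Ioo (0:ℝ) t0, HasDerivAt ξ (ξ' t) t)
    (hξdd : ∀ t ∈ Ioo (0:ℝ) t0, HasDerivAt ξ' (ξ'' t) t) :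
    Tendsto (fun t => t * ξ t / |Real.log t|) (𝓝[>] (0:ℝ)) atTop ∧
    (∃ c > (0:ℝ), ∀ᶠ t in 𝓝[>] (0:ℝ), c * ξ t / t ≤ -ξ' t) ∧
    (∃ Cc > (0:ℝ), ∀ᶠ t in 𝓝[>] (0:ℝ), 0 ≤ ξ'' t ∧ ξ'' t ≤ Cc * (-ξ' t) / t) :=
  stmt11_general a c₁ c₂ c₃ c₄ t0 q' q'' q''' ξ ξ' ξ'' ha ht0 hc₁ hc₂ hc₄ hq' hq'' hq'pos hq''neg
    hq'''pos hgrow hb1 hb2 hξ hξd hξdd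
end

section
/- For q(x) = −log c + (log x)^β with β > 2, the inflection scale satisfies x_n* ~ √(2^{1−β} β n σ² (log n)^{β−1}) and N_n* ~ 2 x_n* as n → ∞, where x_n* solves |q''(x_n*)| = 1/(nσ²) and N_n* = x_n* + nσ² q'(x_n*). -/
open Real Set Filter Asymptotics Topology

/-! With `L = log x`, the condition `q''(x) = -1/(nσ²)` reads
`x² = nσ²β L^(β-2) (L - (β-1))`. Taking logarithms, `2L = log n + O(log L)`, so
`L ~ (log n)/2`, and substituting back gives `x² ~ nσ²β ((log n)/2)^(β-1)`. The same
equation turns `nσ² q'(x)` into `x L/(L - (β-1)) ~ x`, whence `N ~ 2x`. -/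

theorem Asymptotics.IsEquivalent.sqrt {α : Type*} {l : Filter α} {u v : α → ℝ}
    (hv : 0 ≤ v) (h : u ~[l] v) : (fun x => √(u x)) ~[l] fun x => √(v x) := by
  have h := h.rpow hv (r := 1 / 2)
  simp only [Pi.pow_def] at h
  simpa only [Real.sqrt_eq_rpow] using h

theorem isEquivalent_sub_const {α : Type*} {l : Filter α} {f : α → ℝ}
    (hf : Tendsto f l atTop) (a : ℝ) : (fun x => f x - a) ~[l] f := by
  simpa only [sub_eq_add_neg] using
    IsEquivalent.refl.add_const_of_norm_tendsto_atTop (c := -a) (tendsto_norm_atTop_atTop.comp hf)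

theorem tendsto_div_sub_const {α : Type*} {l : Filter α} {f : α → ℝ}
    (hf : Tendsto f l atTop) (a : ℝ) : Tendsto (fun x => f x / (f x - a)) l (𝓝 1) :=
  (isEquivalent_iff_tendsto_one
    ((tendsto_atTop_add_const_right _ (-a) hf).eventually_ne_atTop 0)).mp
      (isEquivalent_sub_const hf a).symm

theorem hasDerivAt_log_rpow (p : ℝ) {x : ℝ} (hx : 1 < x) :
    HasDerivAt (fun y => log y ^ p) (p * log x ^ (p - 1) / x) x := by
  convert (hasDerivAt_log (by linarith : x ≠ 0)).rpow_const (p := p) (Or.inl (log_pos hx).ne')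
    using 1
  field_simp

theorem hasDerivAt_log_rpow_div (p : ℝ) {x : ℝ} (hx : 1 < x) :
    HasDerivAt (fun y => log y ^ p / y) (log x ^ (p - 1) * (p - log x) / x ^ 2) x := by
  have hx0 : x ≠ 0 := by linarith
  have hL : log x ≠ 0 := (log_pos hx).ne'
  refine ((hasDerivAt_log_rpow p hx).fun_div (hasDerivAt_id x) hx0).congr_deriv ?_
  rw [id_eq, rpow_sub_one hL]
  field_simp

section LogHazard

variable {a β : ℝ} {q' q'' : ℝ → ℝ}
  (hq' : ∀ x ∈ Ioi (1 : ℝ), HasDerivAt (fun y => a + log y ^ β) (q' x) x)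
include hq'

theorem logHazard_deriv_eq {x : ℝ} (hx : 1 < x) : q' x = β * (log x ^ (β - 1) / x) :=
  (hq' x hx).unique <| by simpa only [mul_div_assoc] using (hasDerivAt_log_rpow β hx).const_add a

theorem logHazard_deriv2_eq (hq'' : ∀ x ∈ Ioi (1 : ℝ), HasDerivAt q' (q'' x) x) {x : ℝ}
    (hx : 1 < x) : q'' x = β * (log x ^ (β - 2) * (β - 1 - log x) / x ^ 2) := by
  have heq : q' =ᶠ[𝓝 x] fun y => β * (log y ^ (β - 1) / y) :=
    eventually_of_mem (Ioi_mem_nhds hx) fun y hy => logHazard_deriv_eq hq' hy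
  refine (hq'' x hx).unique ?_
  convert ((hasDerivAt_log_rpow_div (β - 1) hx).const_mul β).congr_of_eventuallyEq heq using 3
  ring_nf

theorem sq_eq_of_logHazard_deriv2_eq (hq'' : ∀ x ∈ Ioi (1 : ℝ), HasDerivAt q' (q'' x) x)
    {m x : ℝ} (hm : m ≠ 0) (hx : 1 < x) (h : q'' x = -(1 / m)) :
    x ^ 2 = m * β * log x ^ (β - 2) * (log x - (β - 1)) := by
  rw [logHazard_deriv2_eq hq' hq'' hx] at h
  have hx0 : x ≠ 0 := by linarith
  field_simp at h
  linarith

theorem add_mul_logHazard_deriv_div {m x : ℝ} (hx : 1 < x)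
    (h : x ^ 2 = m * β * log x ^ (β - 2) * (log x - (β - 1))) :
    (x + m * q' x) / (2 * x) = (1 + log x / (log x - (β - 1))) / 2 := by
  have hx0 : x ≠ 0 := by linarith
  have hL : log x ≠ 0 := (log_pos hx).ne'
  have hLa : log x - (β - 1) ≠ 0 := by
    rintro hLa
    rw [hLa, mul_zero] at h
    exact hx0 (pow_eq_zero_iff two_ne_zero |>.mp h)
  have hpow : log x ^ (β - 1) = log x ^ (β - 2) * log x := by
    rw [← rpow_add_one hL]; ring_nf
  rw [logHazard_deriv_eq hq' hx, hpow]
  field_simp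
  linear_combination (-log x) * h

end LogHazard

theorem isLittleO_log_mul_rpow_mul_sub {k : ℝ} (hk : k ≠ 0) (p a : ℝ) :
    (fun t => log (k * t ^ p * (t - a))) =o[atTop] id := by
  have hshift : (fun t => log (t - a)) =o[atTop] id :=
    (isLittleO_log_id_atTop.comp_tendsto
      (tendsto_atTop_add_const_right _ (-a) tendsto_id)).trans_isBigO
        (isEquivalent_sub_const tendsto_id a).isBigO
  refine (((isLittleO_const_id_atTop (log k)).add
    (isLittleO_log_id_atTop.const_mul_left p)).add hshift).congr' ?_ EventuallyEq.rfl
  filter_upwards [eventually_gt_atTop (max a 0)] with t ht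
  have ht0 : 0 < t := (le_max_right _ _).trans_lt ht
  have hta : t - a ≠ 0 := (sub_pos.2 <| (le_max_left _ _).trans_lt ht).ne'
  have htp : t ^ p ≠ 0 := (rpow_pos_of_pos ht0 p).ne'
  rw [log_mul (mul_ne_zero hk htp) hta, log_mul hk htp, log_rpow ht0]

theorem isEquivalent_half_log_natCast_of_sq_eq {k p a : ℝ} (hk : k ≠ 0) {x : ℕ → ℝ}
    (hx : Tendsto x atTop atTop)
    (h : ∀ᶠ n : ℕ in atTop, x n ^ 2 = n * (k * log (x n) ^ p * (log (x n) - a))) :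
    (fun n : ℕ => log n / 2) ~[atTop] fun n => log (x n) := by
  have hrem := ((isLittleO_log_mul_rpow_mul_sub hk p a).comp_tendsto
    (tendsto_log_atTop.comp hx)).const_mul_left (1 / 2)
  refine (IsEquivalent.refl.sub_isLittleO hrem).congr_left ?_
  filter_upwards [h, hx.eventually_gt_atTop 0, eventually_ne_atTop 0] with n hn hx0 hn0
  have hg : k * log (x n) ^ p * (log (x n) - a) ≠ 0 := by
    rintro hg
    rw [hg, mul_zero] at hn
    exact hx0.ne' (pow_eq_zero_iff two_ne_zero |>.mp hn)
  have hlog := congrArg log hn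
  rw [log_pow, log_mul (Nat.cast_ne_zero.2 hn0) hg] at hlog
  simp only [Pi.sub_apply, Function.comp_apply, id]
  push_cast at hlog
  linarith

theorem isEquivalent_sqrt_of_sq_eq {k p a : ℝ} (hk : 0 < k) {x : ℕ → ℝ}
    (hx : Tendsto x atTop atTop)
    (h : ∀ᶠ n : ℕ in atTop, x n ^ 2 = n * (k * log (x n) ^ p * (log (x n) - a))) :
    x ~[atTop] fun n : ℕ => √(n * k * (log n / 2) ^ (p + 1)) := by
  have hL := tendsto_log_atTop.comp hx
  have hsq : (fun n => x n ^ 2) ~[atTop] fun n : ℕ => n * k * log (x n) ^ (p + 1) := by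
    refine ((IsEquivalent.refl (u := fun n : ℕ => n * k * log (x n) ^ p)).mul
      (isEquivalent_sub_const hL a)).congr_left ?_ |>.congr_right ?_
    · filter_upwards [h] with n hn
      rw [hn]; simp only [Pi.mul_apply, Function.comp_apply]; ring
    · filter_upwards [hL.eventually_gt_atTop 0] with n hn
      simp only [Pi.mul_apply, Function.comp_apply]
      rw [rpow_add_one (show log (x n) ≠ 0 from hn.ne'), mul_assoc]
  have hlog2 (n : ℕ) : 0 ≤ log n / 2 := div_nonneg (log_natCast_nonneg n) zero_le_two
  have hpow : (fun n => log (x n) ^ (p + 1)) ~[atTop] fun n : ℕ => (log n / 2) ^ (p + 1) :=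
    (isEquivalent_half_log_natCast_of_sq_eq hk.ne' hx h).symm.rpow hlog2
  refine ((hsq.trans (IsEquivalent.refl.mul hpow)).sqrt fun n => ?_).congr_left ?_
  · exact mul_nonneg (mul_nonneg n.cast_nonneg hk.le) (rpow_nonneg (hlog2 n) _)
  · filter_upwards [hx.eventually_gt_atTop 0] with n hn
    exact sqrt_sq hn.le

theorem stmt14_general (β c σ2 : ℝ) (hβ : 2 < β) (hσ : 0 < σ2)
    (q' q'' : ℝ → ℝ)
    (hq' : ∀ x ∈ Ioi (1:ℝ),
      HasDerivAt (fun y => -Real.log c + (Real.log y) ^ β) (q' x) x)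
    (hq'' : ∀ x ∈ Ioi (1:ℝ), HasDerivAt q' (q'' x) x)
    (xstar Nstar : ℕ → ℝ)
    (hx : ∀ n : ℕ, 1 ≤ n → xstar n ∈ Ioi (1:ℝ) ∧
      q'' (xstar n) = -(1 / ((n : ℝ) * σ2)) ∧
      Nstar n = xstar n + (n : ℝ) * σ2 * q' (xstar n))
    (hxinf : Tendsto xstar atTop atTop) :
    Tendsto (fun n : ℕ =>
        xstar n /
          Real.sqrt ((2:ℝ) ^ (1 - β) * β * ((n : ℝ) * σ2) *
            (Real.log n) ^ (β - 1)))
      atTop (nhds 1) ∧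
    Tendsto (fun n : ℕ => Nstar n / (2 * xstar n)) atTop (nhds 1) := by
  have hβ0 : 0 < β := by linarith
  have hsq (n : ℕ) (hn : 1 ≤ n) : xstar n ^ 2 =
      n * σ2 * β * log (xstar n) ^ (β - 2) * (log (xstar n) - (β - 1)) :=
    sq_eq_of_logHazard_deriv2_eq hq' hq'' (mul_ne_zero (Nat.cast_ne_zero.2 (by omega)) hσ.ne')
      (hx n hn).1 (hx n hn).2.1
  constructor
  · have hequiv := isEquivalent_sqrt_of_sq_eq (p := β - 2) (a := β - 1) (mul_pos hσ hβ0) hxinf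
      (eventually_atTop.2 ⟨1, fun n hn => by rw [hsq n hn]; ring⟩)
    have hD (n : ℕ) : n * (σ2 * β) * (log n / 2) ^ (β - 2 + 1) =
        2 ^ (1 - β) * β * (n * σ2) * log n ^ (β - 1) := by
      rw [div_rpow (log_natCast_nonneg n) zero_le_two, show β - 2 + 1 = β - 1 by ring,
        show 1 - β = -(β - 1) by ring, rpow_neg zero_le_two]
      ring
    simp only [hD] at hequiv
    refine (isEquivalent_iff_tendsto_one ?_).mp hequiv
    filter_upwards [eventually_gt_atTop 1] with n hn
    have hlog : 0 < log n := log_pos (by exact_mod_cast hn)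
    exact (sqrt_pos.2 (by positivity)).ne'
  · have hlim :=
      ((tendsto_div_sub_const (tendsto_log_atTop.comp hxinf) (β - 1)).const_add 1).div_const 2
    rw [show (1 + 1 : ℝ) / 2 = 1 by norm_num] at hlim
    refine hlim.congr' ?_
    filter_upwards [eventually_ge_atTop 1] with n hn
    rw [(hx n hn).2.2, add_mul_logHazard_deriv_div hq' (hx n hn).1 (hsq n hn)]
    rfl

/-- Lemma 2.12 (logarithmic hazard q(x) = −log c + (log x)^β, β > 2):
x_n* ~ √(2^{1−β} β nσ² (log n)^{β−1}) and N_n* ~ 2 x_n*. -/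
theorem stmt14 (β c σ2 : ℝ) (hβ : 2 < β) (hc : 0 < c) (hσ : 0 < σ2)
    (q' q'' : ℝ → ℝ)
    (hq' : ∀ x ∈ Ioi (1:ℝ),
      HasDerivAt (fun y => -Real.log c + (Real.log y) ^ β) (q' x) x)
    (hq'' : ∀ x ∈ Ioi (1:ℝ), HasDerivAt q' (q'' x) x)
    (xstar Nstar : ℕ → ℝ)
    (hx : ∀ n : ℕ, 1 ≤ n → xstar n ∈ Ioi (1:ℝ) ∧
      q'' (xstar n) = -(1 / ((n : ℝ) * σ2)) ∧
      Nstar n = xstar n + (n : ℝ) * σ2 * q' (xstar n))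
    (hxinf : Tendsto xstar atTop atTop) :
    Tendsto (fun n : ℕ =>
        xstar n /
          Real.sqrt ((2:ℝ) ^ (1 - β) * β * ((n : ℝ) * σ2) *
            (Real.log n) ^ (β - 1)))
      atTop (nhds 1) ∧
    Tendsto (fun n : ℕ => Nstar n / (2 * xstar n)) atTop (nhds 1) :=
  stmt14_general β c σ2 hβ hσ q' q'' hq' hq'' xstar Nstar hx hxinf
end
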